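/- Let μ < 0 and k ∈ T^d. Then the function z ↦ Δ_μ(k;z) = 1 + μ ∫_{T^d} (𝓔_k(q) − z)^{-1} dη(q) is strictly decreasing on (−∞, E_min(k)), and Δ_μ(k;z) → 1 as z → −∞. Moreover, if d ∈ {1,2} and k has at least one coordinate different from π, then Δ_μ(k;z) → −∞ as z ↑ E_min(k). -/

import Mathlib

open MeasureTheory Real Filter

noncomputable section

instance fact_two_pi_pos : Fact (0 < 2 * Real.pi) := ⟨by positivity⟩

/-- The `d`-dimensional torus `(ℝ/2πℤ)^d`. -/
abbrev Torus (d : ℕ) : Type := Fin d → AddCircle (2 * Real.pi)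

/-- Cosine as a function on the circle `ℝ/2πℤ`. -/
noncomputable def torusCos : AddCircle (2 * Real.pi) → ℝ := Real.cos_periodic.lift

/-- The one-particle dispersion `ε(p) = 2∑ᵢ (1 − cos pⁱ)` on the torus. -/
noncomputable def eps (d : ℕ) (p : Torus d) : ℝ := 2 * ∑ i, (1 - torusCos (p i))

/-- The normalized Haar measure `η` on the torus `T^d`. -/
noncomputable def η (d : ℕ) : Measure (Torus d) :=
  Measure.pi fun _ => (AddCircle.haarAddCircle : Measure (AddCircle (2 * Real.pi)))

instance (d : ℕ) : IsProbabilityMeasure (η d) := by unfold η; infer_instance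

/-- The two-particle fiber dispersion `𝓔ₖ(p) = ε(k−p) + ε(p)`. -/
noncomputable def calE (d : ℕ) (k p : Torus d) : ℝ := eps d (k - p) + eps d p

/-- `E_min(k) = min_{p ∈ T^d} 𝓔ₖ(p)`. -/
noncomputable def Emin (d : ℕ) (k : Torus d) : ℝ := sInf (Set.range (calE d k))

/-- `E_max(k) = max_{p ∈ T^d} 𝓔ₖ(p)`. -/
noncomputable def Emax (d : ℕ) (k : Torus d) : ℝ := sSup (Set.range (calE d k))

/-- The three-particle dispersion `E(K;p,q) = ε(K−p−q) + ε(p) + ε(q)`. -/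
noncomputable def EE (d : ℕ) (K p q : Torus d) : ℝ := eps d (K - p - q) + eps d p + eps d q

/-- `E_min(K) = min_{p,q ∈ T^d} E(K;p,q)`. -/
noncomputable def E3min (d : ℕ) (K : Torus d) : ℝ :=
  sInf (Set.range fun pq : Torus d × Torus d => EE d K pq.1 pq.2)

/-- `E_max(K) = max_{p,q ∈ T^d} E(K;p,q)`. -/
noncomputable def E3max (d : ℕ) (K : Torus d) : ℝ :=
  sSup (Set.range fun pq : Torus d × Torus d => EE d K pq.1 pq.2)

/-- The two-particle determinant `Δ_μ(k;z) = 1 + μ ∫ (𝓔ₖ(q) − z)⁻¹ dη(q)`. -/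
noncomputable def Delta2 (d : ℕ) (μ : ℝ) (k : Torus d) (z : ℝ) : ℝ :=
  1 + μ * ∫ q, (calE d k q - z)⁻¹ ∂(η d)

/-- The channel determinant `Δ_μ(K,p;z) = 1 + μ ∫ (E(K;p,q) − z)⁻¹ dη(q)`. -/
noncomputable def Delta3 (d : ℕ) (μ : ℝ) (K p : Torus d) (z : ℝ) : ℝ :=
  1 + μ * ∫ q, (EE d K p q - z)⁻¹ ∂(η d)

/-- The point `π ∈ ℝ/2πℤ`. -/
noncomputable def piPt : AddCircle (2 * Real.pi) := ((Real.pi : ℝ) : AddCircle (2 * Real.pi))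

/-!
For `z < E_min(k)` the integrand `(𝓔ₖ(q) − z)⁻¹` is positive, strictly increasing in `z` and
bounded by `(E_min(k) − z)⁻¹`; this gives the strict monotonicity of `Δ_μ(k; ·)` and its limit
at `−∞`. As `z ↑ E_min(k)`, monotone convergence reduces the divergence to
`∫ (𝓔ₖ − E_min(k))⁻¹ dη = ∞`. Since `1 − cos` satisfies the parallelogram inequality, so does
the dispersion: `𝓔ₖ(b + y) + 𝓔ₖ(b − y) ≤ 2 𝓔ₖ(b) + 4 ε(y)`. At a minimiser `b` this gives
`𝓔ₖ(b + y) − E_min(k) ≤ 4 ε(y) ≤ 4 |y|²`, and `|y|⁻²` is not integrable on `T¹` or `T²`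
(on `T²`, already the part `|b| ≤ |a|` of the inner integral is of order `|a|⁻¹`).
-/

open Set Topology
open scoped ENNReal

section InverseIntegral

variable {X : Type*} [MeasurableSpace X] (ν : Measure X) {f : X → ℝ} {m : ℝ}

theorem integrable_inv_sub [IsFiniteMeasure ν] (hf : Measurable f) (hm : ∀ x, m ≤ f x)
    {z : ℝ} (hz : z < m) : Integrable (fun x => (f x - z)⁻¹) ν := by
  refine .of_bound (hf.sub_const z).inv.aestronglyMeasurable (m - z)⁻¹ (.of_forall fun x => ?_)
  rw [Real.norm_of_nonneg (inv_nonneg.2 (by linarith [hm x]))]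
  exact inv_anti₀ (sub_pos.2 hz) (by linarith [hm x])

theorem strictMonoOn_integral_inv_sub [IsFiniteMeasure ν] [NeZero ν] (hf : Measurable f)
    (hm : ∀ x, m ≤ f x) : StrictMonoOn (fun z => ∫ x, (f x - z)⁻¹ ∂ν) (Iio m) := by
  intro z₁ hz₁ z₂ hz₂ hlt
  have hdiff : ∀ x, 0 < (f x - z₂)⁻¹ - (f x - z₁)⁻¹ := fun x =>
    sub_pos.2 (inv_strictAnti₀ (by linarith [hm x, mem_Iio.1 hz₂]) (by linarith))
  have h₁ := integrable_inv_sub ν hf hm hz₁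
  have h₂ := integrable_inv_sub ν hf hm hz₂
  have hpos := (integral_pos_iff_support_of_nonneg (fun x => (hdiff x).le) (h₂.sub h₁)).2 (by
    rw [Function.support_eq_univ fun x => (hdiff x).ne']
    exact Measure.measure_univ_pos.2 (NeZero.ne ν))
  rw [integral_sub h₂ h₁] at hpos
  exact sub_pos.1 hpos

theorem tendsto_integral_inv_sub_atBot [IsFiniteMeasure ν] (hm : ∀ x, m ≤ f x) :
    Tendsto (fun z => ∫ x, (f x - z)⁻¹ ∂ν) atBot (𝓝 0) := by
  have hbound : Tendsto (fun z => (m - z)⁻¹ * ν.real univ) atBot (𝓝 0) := by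
    simpa [← sub_eq_add_neg] using (tendsto_inv_atTop_zero.comp
      (tendsto_atTop_add_const_left _ m tendsto_neg_atBot_atTop)).mul_const (ν.real univ)
  refine squeeze_zero_norm' ?_ hbound
  filter_upwards [eventually_lt_atBot m] with z hz
  refine norm_integral_le_of_norm_le_const (.of_forall fun x => ?_)
  rw [Real.norm_of_nonneg (inv_nonneg.2 (by linarith [hm x]))]
  exact inv_anti₀ (sub_pos.2 hz) (by linarith [hm x])

theorem tendsto_lintegral_inv_sub_nhdsLT (hf : Measurable f) :
    Tendsto (fun z => ∫⁻ x, (ENNReal.ofReal (f x - z))⁻¹ ∂ν) (𝓝[<] m)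
      (𝓝 (∫⁻ x, (ENNReal.ofReal (f x - m))⁻¹ ∂ν)) := by
  have hmono : ∀ x, Monotone fun z => (ENNReal.ofReal (f x - z))⁻¹ := fun x _ _ h =>
    ENNReal.inv_le_inv.2 (ENNReal.ofReal_le_ofReal (by linarith))
  obtain ⟨u, hu_mono, hu_lt, hu_lim⟩ := exists_seq_strictMono_tendsto m
  have hseq := lintegral_tendsto_of_tendsto_of_monotone (μ := ν)
    (fun n => ((hf.sub_const (u n)).ennreal_ofReal.inv).aemeasurable)
    (.of_forall fun x => (hmono x).comp hu_mono.monotone)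
    (.of_forall fun x => tendsto_inv_iff.2
      ((ENNReal.continuous_ofReal.tendsto _).comp (tendsto_const_nhds.sub hu_lim)))
  have hG : Monotone fun z => ∫⁻ x, (ENNReal.ofReal (f x - z))⁻¹ ∂ν := fun _ _ h =>
    lintegral_mono fun x => hmono x h
  convert hG.tendsto_nhdsLT m using 2
  refine le_antisymm (le_of_tendsto' hseq fun n => le_sSup ⟨u n, hu_lt n, rfl⟩) ?_
  exact sSup_le (by rintro _ ⟨z, hz, rfl⟩; exact hG (le_of_lt hz))

theorem tendsto_integral_inv_sub_nhdsLT_atTop [IsFiniteMeasure ν] (hf : Measurable f)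
    (hm : ∀ x, m ≤ f x) (htop : ∫⁻ x, (ENNReal.ofReal (f x - m))⁻¹ ∂ν = ∞) :
    Tendsto (fun z => ∫ x, (f x - z)⁻¹ ∂ν) (𝓝[<] m) atTop := by
  rw [← ENNReal.tendsto_ofReal_nhds_top, ← htop]
  refine (tendsto_lintegral_inv_sub_nhdsLT (m := m) ν hf).congr' ?_
  filter_upwards [self_mem_nhdsWithin] with z (hz : z < m)
  have hpos : ∀ x, 0 < f x - z := fun x => by linarith [hm x]
  rw [ofReal_integral_eq_lintegral_ofReal (integrable_inv_sub ν hf hm hz)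
    (.of_forall fun x => inv_nonneg.2 (hpos x).le)]
  exact lintegral_congr fun x => (ENNReal.ofReal_inv_of_pos (hpos x)).symm

end InverseIntegral

theorem lintegral_Ioo_inv_mul_eq_top {a c : ℝ} (ha : 0 < a) (hc : 0 < c) :
    ∫⁻ x in Ioo 0 a, (ENNReal.ofReal (c * x))⁻¹ = ∞ := by
  by_contra h
  have hint : IntegrableOn (fun x => (c * x)⁻¹) (Ioo 0 a) := by
    refine ⟨(measurable_const.mul measurable_id).inv.aestronglyMeasurable, ?_⟩
    rw [hasFiniteIntegral_iff_ofReal (ae_restrict_of_forall_mem measurableSet_Ioo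
      fun x hx => inv_nonneg.2 (mul_pos hc hx.1).le), setLIntegral_congr_fun measurableSet_Ioo
      fun x hx => ENNReal.ofReal_inv_of_pos (mul_pos hc hx.1)]
    exact lt_top_iff_ne_top.2 h
  have : IntegrableOn (fun x : ℝ => x ^ (-1 : ℝ)) (Ioo 0 a) :=
    IntegrableOn.congr_fun (hint.const_mul c) (fun x _ => by
      rw [rpow_neg_one, mul_inv, mul_inv_cancel_left₀ hc.ne']) measurableSet_Ioo
  exact lt_irrefl _ ((intervalIntegral.integrableOn_Ioo_rpow_iff ha).1 this)

namespace AddCircle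

variable {T : ℝ} [hT : Fact (0 < T)]

theorem lintegral_haarAddCircle_eq_top_iff {g : AddCircle T → ℝ≥0∞} :
    ∫⁻ t, g t ∂haarAddCircle = ∞ ↔ ∫⁻ t, g t = ∞ := by
  rw [volume_eq_smul_haarAddCircle, lintegral_smul_measure, smul_eq_mul, ENNReal.mul_eq_top]
  simp [hT.out]

theorem lintegral_haarAddCircle_eq_top_of_inv_le {g : AddCircle T → ℝ≥0∞} {c : ℝ} (hc : 0 < c)
    (hg : ∀ t : AddCircle T, 0 < ‖t‖ → (ENNReal.ofReal (c * ‖t‖))⁻¹ ≤ g t) :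
    ∫⁻ t, g t ∂haarAddCircle = ∞ := by
  rw [lintegral_haarAddCircle_eq_top_iff, ← AddCircle.lintegral_preimage T 0, zero_add,
    eq_top_iff, ← lintegral_Ioo_inv_mul_eq_top (half_pos hT.out) hc]
  calc ∫⁻ x in Ioo 0 (T / 2), (ENNReal.ofReal (c * x))⁻¹
      ≤ ∫⁻ x in Ioo 0 (T / 2), g x := setLIntegral_mono' measurableSet_Ioo fun x hx => by
        have hx' : ‖(x : AddCircle T)‖ = x :=
          ((norm_coe_eq_abs_iff T hT.out.ne').2 (by
            rw [abs_of_pos hx.1, abs_of_pos hT.out]; exact hx.2.le)).trans (abs_of_pos hx.1)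
        have := hg x (by rw [hx']; exact hx.1)
        rwa [hx'] at this
    _ ≤ ∫⁻ x in Ioc 0 T, g x :=
        lintegral_mono_set <|
          Ioo_subset_Ioc_self.trans (Ioc_subset_Ioc_right (half_le_self hT.out.le))

theorem lintegral_inv_mul_norm_sq_eq_top {c : ℝ} (hc : 0 < c) :
    ∫⁻ t : AddCircle T, (ENNReal.ofReal (c * ‖t‖ ^ 2))⁻¹ ∂haarAddCircle = ∞ := by
  refine lintegral_haarAddCircle_eq_top_of_inv_le (c := c * (T / 2))
    (mul_pos hc (half_pos hT.out)) fun t _ => ?_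
  refine ENNReal.inv_le_inv.2 (ENNReal.ofReal_le_ofReal ?_)
  have := norm_le_half_period T (x := t) hT.out.ne'
  rw [abs_of_pos hT.out] at this
  nlinarith [mul_le_mul_of_nonneg_left this (norm_nonneg t)]

theorem inv_mul_norm_le_lintegral_inv_mul_norm_sq_add {c : ℝ} (hc : 0 < c) {a : AddCircle T}
    (ha : 0 < ‖a‖) :
    (ENNReal.ofReal (c * T * ‖a‖))⁻¹
      ≤ ∫⁻ b : AddCircle T, (ENNReal.ofReal (c * (‖a‖ ^ 2 + ‖b‖ ^ 2)))⁻¹ ∂haarAddCircle := by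
  set u := ‖a‖
  have hball : (haarAddCircle : Measure (AddCircle T)) (Metric.closedBall 0 u)
      = ENNReal.ofReal (2 * u / T) := by
    have hu : 2 * u ≤ T := by
      have := norm_le_half_period T (x := a) hT.out.ne'
      rw [abs_of_pos hT.out] at this; linarith
    rw [ENNReal.ofReal_div_of_pos hT.out,
      ENNReal.eq_div_iff (by simp [hT.out]) ENNReal.ofReal_ne_top,
      ← smul_eq_mul, ← Measure.smul_apply, ← volume_eq_smul_haarAddCircle, volume_closedBall,
      min_eq_right hu]
  calc (ENNReal.ofReal (c * T * u))⁻¹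
      = ∫⁻ _ in Metric.closedBall (0 : AddCircle T) u, (ENNReal.ofReal (2 * c * u ^ 2))⁻¹
          ∂haarAddCircle := by
        rw [setLIntegral_const, hball,
          ← ENNReal.ofReal_inv_of_pos (by positivity : 0 < 2 * c * u ^ 2),
          ← ENNReal.ofReal_inv_of_pos (mul_pos (mul_pos hc hT.out) ha),
          ← ENNReal.ofReal_mul (by positivity)]
        congr 1
        field_simp
    _ ≤ ∫⁻ b in Metric.closedBall (0 : AddCircle T) u, (ENNReal.ofReal (c * (u ^ 2 + ‖b‖ ^ 2)))⁻¹
          ∂haarAddCircle :=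
        setLIntegral_mono' Metric.isClosed_closedBall.measurableSet fun b hb => by
        refine ENNReal.inv_le_inv.2 (ENNReal.ofReal_le_ofReal ?_)
        have := pow_le_pow_left₀ (norm_nonneg b) (mem_closedBall_zero_iff.1 hb) 2
        nlinarith
    _ ≤ _ := setLIntegral_le_lintegral _ _

theorem lintegral_inv_mul_norm_sq_add_norm_sq_eq_top {c : ℝ} (hc : 0 < c) :
    ∫⁻ p : AddCircle T × AddCircle T, (ENNReal.ofReal (c * (‖p.1‖ ^ 2 + ‖p.2‖ ^ 2)))⁻¹
      ∂(haarAddCircle.prod haarAddCircle) = ∞ := by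
  rw [lintegral_prod _ (by fun_prop)]
  exact lintegral_haarAddCircle_eq_top_of_inv_le (mul_pos hc hT.out) fun a ha =>
    inv_mul_norm_le_lintegral_inv_mul_norm_sq_add hc ha

end AddCircle

theorem torusCos_coe (x : ℝ) : torusCos (x : AddCircle (2 * π)) = cos x :=
  cos_periodic.lift_coe x

@[fun_prop]
theorem continuous_torusCos : Continuous torusCos :=
  continuous_cos.quotient_liftOn' _

theorem torusCos_eq_cos_norm (y : AddCircle (2 * π)) : torusCos y = cos ‖y‖ := by
  obtain ⟨x, rfl⟩ := QuotientAddGroup.mk_surjective y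
  rw [AddCircle.norm_eq, cos_abs, torusCos_coe, cos_sub_int_mul_two_pi]

theorem one_sub_torusCos_le (y : AddCircle (2 * π)) : 1 - torusCos y ≤ ‖y‖ ^ 2 / 2 := by
  linarith [torusCos_eq_cos_norm y, one_sub_sq_div_two_le_cos (x := ‖y‖)]

theorem eps_add_add_eps_sub_le {d : ℕ} (x y : Torus d) :
    eps d (x + y) + eps d (x - y) ≤ 2 * eps d x + 2 * eps d y := by
  have key (a b : AddCircle (2 * π)) : (1 - torusCos (a + b)) + (1 - torusCos (a - b))
      ≤ 2 * (1 - torusCos a) + 2 * (1 - torusCos b) := by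
    obtain ⟨s, rfl⟩ := QuotientAddGroup.mk_surjective a
    obtain ⟨t, rfl⟩ := QuotientAddGroup.mk_surjective b
    rw [← AddCircle.coe_add, ← AddCircle.coe_sub]
    simp only [torusCos_coe, cos_add, cos_sub]
    nlinarith [mul_nonneg (sub_nonneg.2 (cos_le_one s)) (sub_nonneg.2 (cos_le_one t))]
  simp only [eps, ← mul_add, ← Finset.sum_add_distrib, Finset.mul_sum]
  gcongr with i
  simp only [Pi.add_apply, Pi.sub_apply]
  linarith [key (x i) (y i)]

theorem eps_le_sum_norm_sq {d : ℕ} (y : Torus d) : eps d y ≤ ∑ i, ‖y i‖ ^ 2 := by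
  simp only [eps, Finset.mul_sum]
  gcongr with i
  linarith [one_sub_torusCos_le (y i)]

theorem continuous_calE (d : ℕ) (k : Torus d) : Continuous (calE d k) := by
  unfold calE eps
  fun_prop

theorem calE_add_add_calE_sub_le {d : ℕ} (k p y : Torus d) :
    calE d k (p + y) + calE d k (p - y) ≤ 2 * calE d k p + 4 * eps d y := by
  have h₁ : k - (p + y) = (k - p) - y := by abel
  have h₂ : k - (p - y) = (k - p) + y := by abel
  simp only [calE, h₁, h₂]
  linarith [eps_add_add_eps_sub_le (k - p) y, eps_add_add_eps_sub_le p y]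

theorem Emin_le_calE (d : ℕ) (k q : Torus d) : Emin d k ≤ calE d k q :=
  csInf_le (isCompact_range (continuous_calE d k)).bddBelow ⟨q, rfl⟩

theorem exists_calE_eq_Emin (d : ℕ) (k : Torus d) : ∃ b, calE d k b = Emin d k :=
  (isCompact_range (continuous_calE d k)).sInf_mem (range_nonempty _)

theorem exists_calE_add_sub_Emin_le (d : ℕ) (k : Torus d) :
    ∃ b, ∀ y, calE d k (b + y) - Emin d k ≤ 4 * ∑ i, ‖y i‖ ^ 2 := by
  obtain ⟨b, hb⟩ := exists_calE_eq_Emin d k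
  refine ⟨b, fun y => ?_⟩
  linarith [calE_add_add_calE_sub_le k b y, Emin_le_calE d k (b - y), eps_le_sum_norm_sq y]

instance (d : ℕ) : (η d).IsAddLeftInvariant := by
  unfold η
  infer_instance

open AddCircle in
theorem lintegral_inv_mul_sum_norm_sq_eq_top {d : ℕ} (hd : d = 1 ∨ d = 2) {c : ℝ}
    (hc : 0 < c) :
    ∫⁻ y : Torus d, (ENNReal.ofReal (c * ∑ i, ‖y i‖ ^ 2))⁻¹ ∂η d = ∞ := by
  rcases hd with rfl | rfl
  · rw [← lintegral_inv_mul_norm_sq_eq_top (T := 2 * π) hc,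
      ← (measurePreserving_funUnique (haarAddCircle : Measure (AddCircle (2 * π))) (Fin 1)
        ).lintegral_comp_emb (MeasurableEquiv.funUnique _ _).measurableEmbedding]
    simp only [Fin.sum_univ_one, MeasurableEquiv.funUnique_apply, Fin.default_eq_zero]
    rfl
  · rw [← lintegral_inv_mul_norm_sq_add_norm_sq_eq_top (T := 2 * π) hc,
      ← (measurePreserving_piFinTwo fun _ => (haarAddCircle : Measure (AddCircle (2 * π)))
        ).lintegral_comp_emb (MeasurableEquiv.piFinTwo _).measurableEmbedding]
    simp only [Fin.sum_univ_two, MeasurableEquiv.piFinTwo_apply]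
    rfl

theorem lintegral_inv_calE_sub_Emin_eq_top {d : ℕ} (hd : d = 1 ∨ d = 2) (k : Torus d) :
    ∫⁻ q, (ENNReal.ofReal (calE d k q - Emin d k))⁻¹ ∂η d = ∞ := by
  obtain ⟨b, hb⟩ := exists_calE_add_sub_Emin_le d k
  rw [← lintegral_add_left_eq_self _ b, eq_top_iff,
    ← lintegral_inv_mul_sum_norm_sq_eq_top hd four_pos]
  exact lintegral_mono fun y => ENNReal.inv_le_inv.2 (ENNReal.ofReal_le_ofReal (hb y))

/-- for `μ < 0` the map `z ↦ Δ_μ(k;z)` is strictly decreasing on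
`(−∞, E_min(k))` and tends to `1` as `z → −∞`; moreover if `d ∈ {1,2}` and `k` has a
coordinate different from `π`, then `Δ_μ(k;z) → −∞` as `z ↑ E_min(k)`. -/
theorem determinant_monotone_and_limits (d : ℕ) (μ : ℝ) (hμ : μ < 0) (k : Torus d) :
    StrictAntiOn (fun z => Delta2 d μ k z) (Set.Iio (Emin d k)) ∧
    Tendsto (fun z => Delta2 d μ k z) atBot (nhds 1) ∧
    ((d = 1 ∨ d = 2) → (∃ i, k i ≠ piPt) →
      Tendsto (fun z => Delta2 d μ k z)
        (nhdsWithin (Emin d k) (Set.Iio (Emin d k))) atBot) := by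
  have hf := (continuous_calE d k).measurable
  have hm := Emin_le_calE d k
  refine ⟨fun z₁ hz₁ z₂ hz₂ hlt => ?_, ?_, fun hd _ => ?_⟩
  · exact add_lt_add_right
      (mul_lt_mul_of_neg_left (strictMonoOn_integral_inv_sub (η d) hf hm hz₁ hz₂ hlt) hμ) 1
  · simpa [Delta2] using ((tendsto_integral_inv_sub_atBot (η d) hm).const_mul μ).const_add 1
  · exact tendsto_atBot_add_const_left _ 1 ((tendsto_integral_inv_sub_nhdsLT_atTop (η d) hf hm
      (lintegral_inv_calE_sub_Emin_eq_top hd k)).const_mul_atTop_of_neg hμ)
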